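/- The price of stability of every n-player Shapley cost sharing game with submodular cost functions is at most H_n: if every C^r is submodular (C^r(X ∪ {i}) − C^r(X) ≥ C^r(Y ∪ {i}) − C^r(Y) for all X ⊆ Y ⊆ N, i ∈ N \ Y), nonnegative, nondecreasing, and C^r(∅) = 0, then there exists a pure Nash equilibrium P with C(P) ≤ H_n · C(Q) for every strategy vector Q, where H_n = Σ_{l=1}^{n} 1/l. -/

import Mathlib

open Finset

def preSet {N : Type*} [DecidableEq N] (S : Finset N)
    (π : {x // x ∈ S} ≃ Fin S.card) (i : {x // x ∈ S}) : Finset N :=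
  (S.attach.filter (fun j => π j < π i)).image Subtype.val

noncomputable def shapley {N : Type*} [DecidableEq N]
    (C : Finset N → ℝ) (S : Finset N) (i : N) : ℝ :=
  if hi : i ∈ S then
    (1 / (Nat.factorial S.card : ℝ)) *
      ∑ π : {x // x ∈ S} ≃ Fin S.card,
        (C (preSet S π ⟨i, hi⟩ ∪ {i}) - C (preSet S π ⟨i, hi⟩))
  else 0

/-- `users P r = P^r = {i : r ∈ P_i}`, the set of players using resource `r`. -/
def users {n : ℕ} {R : Type*} [DecidableEq R]
    (P : Fin n → Finset R) (r : R) : Finset (Fin n) :=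
  Finset.univ.filter (fun i => r ∈ P i)

/-- The private cost of player `i` under Shapley cost sharing:
`C_i(P) = Σ_{r ∈ P_i} φ_i(C^r, P^r)`. -/
noncomputable def privCost {n : ℕ} {R : Type*} [DecidableEq R]
    (Cr : R → Finset (Fin n) → ℝ) (P : Fin n → Finset R) (i : Fin n) : ℝ :=
  ∑ r ∈ P i, shapley (Cr r) (users P r) i

/-- The social cost `C(P) = Σ_{r ∈ R} C^r(P^r)`. -/
noncomputable def socCost {n : ℕ} {R : Type*} [Fintype R] [DecidableEq R]
    (Cr : R → Finset (Fin n) → ℝ) (P : Fin n → Finset R) : ℝ :=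
  ∑ r : R, Cr r (users P r)

/-- The Shapley potential
`Φ(P) = Σ_{r ∈ R} Σ_{∅ ≠ T ⊆ P^r} ((|P^r|-|T|)!(|T|-1)!/|P^r|!) · C^r(T)`. -/
noncomputable def pot {n : ℕ} {R : Type*} [Fintype R] [DecidableEq R]
    (Cr : R → Finset (Fin n) → ℝ) (P : Fin n → Finset R) : ℝ :=
  ∑ r : R, ∑ T ∈ (users P r).powerset.filter (fun T => T.Nonempty),
    ((Nat.factorial ((users P r).card - T.card) : ℝ) *
        (Nat.factorial (T.card - 1) : ℝ) / (Nat.factorial (users P r).card : ℝ)) *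
      Cr r T

/-- `P` is a pure Nash equilibrium of the Shapley cost sharing game. -/
def isPNE {n : ℕ} {R : Type*} [DecidableEq R]
    (Strat : Fin n → Set (Finset R)) (Cr : R → Finset (Fin n) → ℝ)
    (P : Fin n → Finset R) : Prop :=
  (∀ i, P i ∈ Strat i) ∧
    ∀ i, ∀ Q ∈ Strat i, privCost Cr P i ≤ privCost Cr (Function.update P i Q) i

/-- `H_k`, the `k`-th harmonicNum number. -/
noncomputable def harmonicNum (k : ℕ) : ℝ := ∑ l ∈ Finset.Icc 1 k, (1 / (l : ℝ))

/-!
On every resource put the Hart–Mas-Colell potential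
`Φ(S) = ∑_{∅ ≠ T ⊆ S} (|S|-|T|)! (|T|-1)! / |S|! · C(T)`, whose sum over the resources is `pot`.
Counting the orderings of `S` in which `i` is preceded by exactly `A` gives
`φ_i(C, S) = Φ(S) - Φ(S ∖ {i})`, so a unilateral deviation changes `pot` by exactly the change
in the deviator's cost, and a minimiser `P` of `pot` is a Nash equilibrium.
Double counting gives the recursion `|S| Φ(S) = C(S) + ∑_{i ∈ S} Φ(S ∖ {i})`; with submodularity,
`∑_{i ∈ S} (C(S) - C(S ∖ {i})) ≤ C(S)`, so `C ≤ Φ` by induction. The coefficients of `Φ(S)` sum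
to `H_{|S|}`, so monotonicity gives `Φ(S) ≤ H_{|S|} C(S)`. Hence
`C(P) ≤ pot P ≤ pot Q ≤ H_n C(Q)`.
-/

open scoped Nat

/-- Equal fibre sizes give one `e₀ : α ≃ β` with `g ∘ e₀ = f`; the others are `e₀ ∘ σ` with `σ`
in the stabiliser of `f`, which `DomMulAct.stabilizer_card` counts. -/
theorem card_equiv_comp_eq {α β ι : Type*} [Fintype α] [Fintype β] [DecidableEq α]
    [DecidableEq β] [Fintype ι] [DecidableEq ι] {f : α → ι} {g : β → ι}
    (h : ∀ c, Fintype.card {a // f a = c} = Fintype.card {b // g b = c}) :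
    Fintype.card {e : α ≃ β // g ∘ e = f} = ∏ c, (Fintype.card {a // f a = c})! := by
  obtain ⟨e₀, he₀⟩ : ∃ e₀ : α ≃ β, g ∘ e₀ = f :=
    ⟨_, funext (Equiv.ofFiberEquiv_map fun c => Fintype.equivOfCardEq (h c))⟩
  have hg : f ∘ e₀.symm = g := by
    rw [← he₀]
    ext
    simp
  rw [← DomMulAct.stabilizer_card]
  refine Fintype.card_congr ((Equiv.refl α).equivCongr e₀.symm |>.subtypeEquiv fun e => ?_)
  change g ∘ e = f ↔ f ∘ e₀.symm ∘ e = f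
  rw [← Function.comp_assoc, hg]

theorem prod_factorial_card_compare {n : ℕ} (a : Fin n) :
    ∏ c, (Fintype.card {k : Fin n // compare k a = c})! = (a : ℕ)! * (n - 1 - a)! := by
  rw [show (univ : Finset Ordering) = {.lt, .eq, .gt} from rfl, prod_insert (by decide),
    prod_insert (by decide), prod_singleton]
  simp only [Fintype.card_subtype, compare_lt_iff_lt, compare_eq_iff_eq, compare_gt_iff_gt,
    filter_gt_eq_Iio, filter_lt_eq_Ioi, filter_eq', mem_univ, if_true, Fin.card_Iio, Fin.card_Ioi,
    card_singleton, Nat.factorial_one, one_mul]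

theorem card_subtype_mem_eq_card_filter {N : Type*} (S : Finset N) (p : N → Prop)
    [DecidablePred p] : Fintype.card {j : S // p j} = #(S.filter p) := by
  rw [Fintype.card_subtype, ← card_map (Function.Embedding.subtype _)]
  congr 1
  ext x
  simp [and_comm]

section Orderings

variable {N : Type*} [DecidableEq N] {S : Finset N}

/-- The position of `x` relative to `i` in an ordering in which `A` is the set of predecessors
of `i`. -/
def prefixClass (A : Finset N) (i x : N) : Ordering :=
  if x ∈ A then .lt else if x = i then .eq else .gt

theorem card_filter_prefixClass {i : N} (hi : i ∈ S) {A : Finset N} (hA : A ⊆ S.erase i)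
    (ha : #A < #S) (c : Ordering) :
    #(S.filter (prefixClass A i · = c)) = #(univ.filter (compare · (⟨#A, ha⟩ : Fin #S) = c)) := by
  have hAS : A ⊆ S := hA.trans (erase_subset i S)
  have hiA : i ∉ A := fun h => (mem_erase.mp (hA h)).1 rfl
  cases c
  · have hlt : S.filter (prefixClass A i · = .lt) = A := by
      ext x
      by_cases x ∈ A <;> simp_all [prefixClass]
    simp [hlt, compare_lt_iff_lt, filter_gt_eq_Iio]
  · have heq : S.filter (prefixClass A i · = .eq) = {i} := by
      ext x
      by_cases x ∈ A <;> by_cases x = i <;> simp_all [prefixClass]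
    simp [heq, filter_eq']
  · have hgt : S.filter (prefixClass A i · = .gt) = S.erase i \ A := by
      ext x
      by_cases x ∈ A <;> by_cases x = i <;> simp_all [prefixClass]
    simp [hgt, compare_gt_iff_gt, filter_lt_eq_Ioi, card_sdiff_of_subset hA, card_erase_of_mem hi]

variable (π : {x // x ∈ S} ≃ Fin #S)

theorem val_mem_preSet {i j : {x // x ∈ S}} : j.1 ∈ preSet S π i ↔ π j < π i := by
  simp [preSet]

theorem preSet_subset_erase (i : {x // x ∈ S}) : preSet S π i ⊆ S.erase i := by
  intro x hx
  obtain ⟨j, hj, rfl⟩ := mem_image.mp hx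
  exact mem_erase.mpr ⟨fun h => (mem_filter.mp hj).2.ne (congrArg π (Subtype.ext h)), j.2⟩

theorem card_preSet (i : {x // x ∈ S}) : #(preSet S π i) = π i := by
  rw [preSet, card_image_of_injective _ Subtype.val_injective, ← Fin.card_Iio,
    ← card_map π.symm.toEmbedding]
  congr 1
  ext j
  simp

theorem preSet_eq_iff {i : N} (hi : i ∈ S) {A : Finset N} (hA : A ⊆ S.erase i)
    (ha : #A < #S) :
    preSet S π ⟨i, hi⟩ = A ↔ ∀ j, compare (π j) ⟨#A, ha⟩ = prefixClass A i j := by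
  have hiA : i ∉ A := fun h => (mem_erase.mp (hA h)).1 rfl
  constructor
  · rintro rfl j
    have hπi : π ⟨i, hi⟩ = ⟨_, ha⟩ := Fin.ext (card_preSet π _).symm
    rw [← hπi, prefixClass]
    split_ifs with hjA hji
    · exact compare_lt_iff_lt.mpr ((val_mem_preSet π).mp hjA)
    · rw [compare_eq_iff_eq, show j = ⟨i, hi⟩ from Subtype.ext hji]
    · refine compare_gt_iff_gt.mpr (lt_of_le_of_ne (not_lt.mp (hjA ∘ (val_mem_preSet π).mpr)) ?_)
      exact fun h => hji (congrArg Subtype.val (π.injective h.symm))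
  · intro h
    have hπi : π ⟨i, hi⟩ = ⟨_, ha⟩ := by simpa [prefixClass, hiA] using h ⟨i, hi⟩
    ext x
    by_cases hx : x ∈ S
    · have hlt := h ⟨x, hx⟩
      rw [val_mem_preSet π (j := ⟨x, hx⟩), hπi, ← compare_lt_iff_lt, hlt, prefixClass]
      split_ifs <;> simp_all
    · exact iff_of_false (fun h' => hx (mem_of_mem_erase (preSet_subset_erase π _ h')))
        (fun h' => hx (mem_of_mem_erase (hA h')))

omit π in
theorem card_filter_preSet_eq {i : N} (hi : i ∈ S) {A : Finset N} (hA : A ⊆ S.erase i) :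
    #{π : {x // x ∈ S} ≃ Fin #S | preSet S π ⟨i, hi⟩ = A} = (#A)! * (#S - 1 - #A)! := by
  have ha : #A < #S := by
    have := card_erase_of_mem hi ▸ card_le_card hA
    have := card_pos.mpr ⟨i, hi⟩
    omega
  have hπ : ∀ π, preSet S π ⟨i, hi⟩ = A ↔
      (compare · ⟨#A, ha⟩) ∘ π = fun j : S => prefixClass A i j :=
    fun π => (preSet_eq_iff π hi hA ha).trans funext_iff.symm
  have hfib : ∀ c, Fintype.card {j : S // prefixClass A i j = c} =
      Fintype.card {k : Fin #S // compare k ⟨#A, ha⟩ = c} := fun c => by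
    rw [card_subtype_mem_eq_card_filter S (prefixClass A i · = c), Fintype.card_subtype,
      card_filter_prefixClass hi hA ha]
  rw [← Fintype.card_subtype, Fintype.card_congr (Equiv.subtypeEquivRight hπ),
    card_equiv_comp_eq hfib, Fintype.prod_congr _ _ (fun c => by rw [hfib c]),
    prod_factorial_card_compare]

theorem sum_preSet_eq_sum_powerset {i : N} (hi : i ∈ S) (g : Finset N → ℝ) :
    ∑ π : {x // x ∈ S} ≃ Fin #S, g (preSet S π ⟨i, hi⟩) =
      ∑ A ∈ (S.erase i).powerset, ((#A)! * (#S - 1 - #A)! : ℝ) * g A := by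
  rw [← sum_fiberwise_of_maps_to (g := fun π => preSet S π ⟨i, hi⟩)
    fun π _ => mem_powerset.mpr (preSet_subset_erase π _)]
  refine sum_congr rfl fun A hA => ?_
  rw [sum_congr rfl fun π hπ => by rw [(mem_filter.mp hπ).2], sum_const, nsmul_eq_mul,
    card_filter_preSet_eq hi (mem_powerset.mp hA)]
  push_cast
  rfl

end Orderings

noncomputable def potCoeff (s t : ℕ) : ℝ := (s - t)! * (t - 1)! / s !

theorem potCoeff_nonneg (s t : ℕ) : 0 ≤ potCoeff s t := by
  unfold potCoeff
  positivity

theorem potCoeff_add_potCoeff_succ {s t : ℕ} (ht : 1 ≤ t) (hts : t < s) :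
    potCoeff s t + potCoeff s (t + 1) = potCoeff (s - 1) t := by
  obtain ⟨k, rfl⟩ : ∃ k, t = k + 1 := ⟨t - 1, by omega⟩
  obtain ⟨d, rfl⟩ : ∃ d, s = k + d + 2 := ⟨s - k - 2, by omega⟩
  simp only [potCoeff, show k + d + 2 - (k + 1) = d + 1 by omega,
    show k + d + 2 - 1 = k + d + 1 by omega, show k + d + 2 - (k + 1 + 1) = d by omega,
    show k + d + 1 - (k + 1) = d by omega, add_tsub_cancel_right]
  rw [Nat.factorial_succ d, Nat.factorial_succ k, show k + d + 2 = k + d + 1 + 1 by omega,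
    Nat.factorial_succ (k + d + 1)]
  push_cast
  field_simp
  ring

theorem card_mul_potCoeff {s t : ℕ} (hs : 1 ≤ s) (hts : t ≤ s) :
    s * potCoeff s t = (s - t : ℕ) * potCoeff (s - 1) t + if t = s then 1 else 0 := by
  obtain ⟨m, rfl⟩ : ∃ m, s = m + 1 := ⟨s - 1, by omega⟩
  rw [add_tsub_cancel_right]
  split_ifs with h
  · subst h
    rw [tsub_self, Nat.cast_zero, zero_mul, zero_add, potCoeff, tsub_self, add_tsub_cancel_right,
      Nat.factorial_zero, Nat.factorial_succ]
    push_cast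
    field_simp
  · obtain ⟨d, rfl⟩ : ∃ d, m = t + d := ⟨m - t, by omega⟩
    rw [potCoeff, potCoeff, show t + d + 1 - t = d + 1 by omega, add_tsub_cancel_left,
      Nat.factorial_succ d, Nat.factorial_succ (t + d)]
    push_cast
    field_simp
    ring

theorem choose_mul_potCoeff {s k : ℕ} (hk : k < s) :
    (s.choose (k + 1) : ℝ) * potCoeff s (k + 1) = 1 / (k + 1) := by
  have h := Nat.choose_mul_factorial_mul_factorial (Nat.succ_le_of_lt hk)
  rw [Nat.factorial_succ] at h
  rw [potCoeff, add_tsub_cancel_right, eq_div_iff (by positivity)]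
  field_simp
  rw [← h]
  push_cast
  ring

section Potential

variable {N : Type*} {C : Finset N → ℝ}

variable (C) in
noncomputable def shapleyPotential (S : Finset N) : ℝ :=
  ∑ T ∈ S.powerset.filter (fun T => T.Nonempty), potCoeff #S #T * C T

theorem shapleyPotential_eq_sum_powerset (hC0 : C ∅ = 0) (S : Finset N) :
    shapleyPotential C S = ∑ T ∈ S.powerset, potCoeff #S #T * C T := by
  rw [shapleyPotential, sum_filter]
  refine sum_congr rfl fun T _ => ?_
  rcases T.eq_empty_or_nonempty with rfl | hT
  · simp [hC0]
  · rw [if_pos hT]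

theorem sum_potCoeff (S : Finset N) :
    ∑ T ∈ S.powerset.filter (fun T => T.Nonempty), potCoeff #S #T = harmonicNum #S := by
  rw [sum_filter]
  simp_rw [← card_pos]
  rw [sum_powerset_apply_card (fun t => if 0 < t then potCoeff #S t else 0), sum_range_succ',
    harmonicNum, ← Ico_add_one_right_eq_Icc, sum_Ico_eq_sum_range]
  simp only [lt_irrefl, if_false, smul_zero, add_zero, add_tsub_cancel_right, Nat.succ_pos, if_true]
  refine sum_congr rfl fun k hk => ?_
  rw [nsmul_eq_mul, choose_mul_potCoeff (mem_range.mp hk), add_comm 1 k, Nat.cast_add_one]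

theorem shapleyPotential_le (hmono : Monotone C) (S : Finset N) :
    shapleyPotential C S ≤ harmonicNum #S * C S := by
  rw [← sum_potCoeff, sum_mul]
  exact sum_le_sum fun T hT =>
    mul_le_mul_of_nonneg_left (hmono (mem_powerset.mp (mem_filter.mp hT).1)) (potCoeff_nonneg _ _)

variable [DecidableEq N]

/-- `potCoeff #S (#A + 1) = #A! (#S - 1 - #A)! / #S!` is the probability that `A` is the set of
predecessors of `i` in a uniformly random ordering of `S`. -/
theorem shapley_eq_sum_powerset (C : Finset N → ℝ) {S : Finset N} {i : N} (hi : i ∈ S) :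
    shapley C S i =
      ∑ A ∈ (S.erase i).powerset, potCoeff #S (#A + 1) * (C (insert i A) - C A) := by
  rw [shapley, dif_pos hi, sum_preSet_eq_sum_powerset hi (fun A => C (A ∪ {i}) - C A), mul_sum]
  refine sum_congr rfl fun A _ => ?_
  rw [potCoeff, union_singleton, add_tsub_cancel_right, Nat.sub_sub, add_comm 1]
  ring

theorem shapley_of_notMem (C : Finset N → ℝ) {S : Finset N} {i : N} (hi : i ∉ S) :
    shapley C S i = 0 :=
  dif_neg hi

theorem shapleyPotential_sub_shapley (hC0 : C ∅ = 0) (S : Finset N) (i : N) :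
    shapleyPotential C S - shapley C S i = shapleyPotential C (S.erase i) := by
  rcases (em (i ∈ S)).symm with hi | hi
  · rw [shapley_of_notMem C hi, sub_zero, erase_eq_of_notMem hi]
  have hcard : #(S.erase i) = #S - 1 := card_erase_of_mem hi
  rw [shapleyPotential_eq_sum_powerset hC0, shapleyPotential_eq_sum_powerset hC0,
    shapley_eq_sum_powerset C hi, ← insert_erase hi, sum_powerset_insert (notMem_erase i S),
    insert_erase hi, ← sum_add_distrib, ← sum_sub_distrib, hcard]
  refine sum_congr rfl fun A hA => ?_
  have hA : A ⊆ S.erase i := mem_powerset.mp hA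
  rw [card_insert_of_notMem fun h => notMem_erase i S (hA h)]
  rcases A.eq_empty_or_nonempty with rfl | hA0
  · simp [hC0]
  · have := card_le_card hA
    have := card_pos.mpr ⟨i, hi⟩
    rw [← potCoeff_add_potCoeff_succ (card_pos.mpr hA0) (by omega)]
    ring

theorem sum_sum_powerset_erase {M : Type*} [AddCommMonoid M] (S : Finset N)
    (f : Finset N → M) :
    ∑ i ∈ S, ∑ T ∈ (S.erase i).powerset, f T = ∑ T ∈ S.powerset, #(S \ T) • f T := by
  rw [sum_comm' (t' := S.powerset) (s' := (S \ ·)) fun i T => by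
    simp only [mem_powerset, mem_sdiff, subset_erase]
    tauto]
  simp_rw [sum_const]

theorem card_mul_shapleyPotential (hC0 : C ∅ = 0) {S : Finset N} (hS : S.Nonempty) :
    #S * shapleyPotential C S = C S + ∑ i ∈ S, shapleyPotential C (S.erase i) := by
  have hs := card_pos.mpr hS
  rw [sum_congr rfl fun i hi => by rw [shapleyPotential_eq_sum_powerset hC0, card_erase_of_mem hi],
    sum_sum_powerset_erase, shapleyPotential_eq_sum_powerset hC0, mul_sum]
  calc ∑ T ∈ S.powerset, #S * (potCoeff #S #T * C T)
      = ∑ T ∈ S.powerset,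
          ((if T = S then C T else 0) + #(S \ T) • (potCoeff (#S - 1) #T * C T)) := by
        refine sum_congr rfl fun T hT => ?_
        have hTS := mem_powerset.mp hT
        have hcard : #T = #S ↔ T = S := by
          rw [← eq_iff_card_le_of_subset hTS, le_antisymm_iff, and_iff_right (card_le_card hTS)]
        rw [← mul_assoc, card_mul_potCoeff hs (card_le_card hTS), nsmul_eq_mul,
          card_sdiff_of_subset hTS]
        simp only [hcard]
        split_ifs <;> ring
    _ = C S + ∑ T ∈ S.powerset, #(S \ T) • (potCoeff (#S - 1) #T * C T) := by
        rw [sum_add_distrib, sum_ite_eq' _ _ C, if_pos (mem_powerset_self S)]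

def IsSubmodular (C : Finset N → ℝ) : Prop :=
  ∀ X Y i, X ⊆ Y → i ∉ Y → C (insert i Y) - C Y ≤ C (insert i X) - C X

theorem IsSubmodular.sum_sub_erase_le (hC : IsSubmodular C) (h0 : 0 ≤ C ∅) (S : Finset N) :
    ∑ i ∈ S, (C S - C (S.erase i)) ≤ C S := by
  induction S using Finset.induction_on with
  | empty => simpa using h0
  | @insert j S hj ih =>
    have hstep : ∀ i ∈ S, C (insert j S) - C ((insert j S).erase i) ≤ C S - C (S.erase i) :=
      fun i hi => by
        have := hC (S.erase i) ((insert j S).erase i) i (erase_subset_erase i (subset_insert j S))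
          (notMem_erase i _)
        rwa [insert_erase (mem_insert_of_mem hi), insert_erase hi] at this
    rw [sum_insert hj, erase_insert hj]
    linarith [sum_le_sum hstep]

theorem IsSubmodular.le_shapleyPotential (hC : IsSubmodular C) (hC0 : C ∅ = 0)
    (S : Finset N) : C S ≤ shapleyPotential C S := by
  induction S using Finset.strongInduction with
  | H S ih =>
    rcases S.eq_empty_or_nonempty with rfl | hS
    · simp [shapleyPotential_eq_sum_powerset hC0, hC0]
    have hrec := card_mul_shapleyPotential hC0 hS
    have hmarg := hC.sum_sub_erase_le hC0.ge S
    have hih := sum_le_sum fun i hi => ih (S.erase i) (erase_ssubset hi)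
    rw [sum_sub_distrib, sum_const, nsmul_eq_mul] at hmarg
    refine le_of_mul_le_mul_left ?_ (by exact_mod_cast card_pos.mpr hS : (0 : ℝ) < #S)
    linarith

end Potential

section Game

variable {n : ℕ} {R : Type*} [DecidableEq R] (Cr : R → Finset (Fin n) → ℝ)

theorem mem_users {P : Fin n → Finset R} {r : R} {j : Fin n} : j ∈ users P r ↔ r ∈ P j := by
  simp [users]

theorem erase_users_update (P : Fin n → Finset R) (i : Fin n) (Q : Finset R) (r : R) :
    (users (Function.update P i Q) r).erase i = (users P r).erase i := by
  ext j
  rcases eq_or_ne j i with rfl | hj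
  · simp
  · simp [mem_users, hj]

variable [Fintype R]

theorem pot_eq_sum_shapleyPotential (P : Fin n → Finset R) :
    pot Cr P = ∑ r, shapleyPotential (Cr r) (users P r) :=
  rfl

theorem privCost_eq_sum_univ (P : Fin n → Finset R) (i : Fin n) :
    privCost Cr P i = ∑ r, shapley (Cr r) (users P r) i :=
  sum_subset (subset_univ (P i)) fun _ _ hr => shapley_of_notMem _ (hr ∘ mem_users.mp)

variable {Cr}

/-- Removing `i`'s Shapley share from the potential leaves a quantity independent of `P i`. -/
theorem pot_sub_privCost (hC0 : ∀ r, Cr r ∅ = 0) (P : Fin n → Finset R) (i : Fin n) :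
    pot Cr P - privCost Cr P i = ∑ r, shapleyPotential (Cr r) ((users P r).erase i) := by
  rw [privCost_eq_sum_univ, pot_eq_sum_shapleyPotential, ← sum_sub_distrib]
  exact sum_congr rfl fun r _ => shapleyPotential_sub_shapley (hC0 r) _ _

theorem pot_update_sub_pot (hC0 : ∀ r, Cr r ∅ = 0) (P : Fin n → Finset R) (i : Fin n)
    (Q : Finset R) :
    pot Cr (Function.update P i Q) - pot Cr P =
      privCost Cr (Function.update P i Q) i - privCost Cr P i := by
  have h := pot_sub_privCost hC0 (Function.update P i Q) i
  simp only [erase_users_update, ← pot_sub_privCost hC0 P i] at h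
  linarith

theorem isPNE_of_isMinOn {Strat : Fin n → Set (Finset R)} (hC0 : ∀ r, Cr r ∅ = 0)
    {P : Fin n → Finset R} (hP : P ∈ Set.univ.pi Strat)
    (hmin : IsMinOn (pot Cr) (Set.univ.pi Strat) P) : isPNE Strat Cr P := by
  refine ⟨Set.mem_univ_pi.mp hP, fun i Q hQ => ?_⟩
  have hle : pot Cr P ≤ pot Cr (Function.update P i Q) :=
    hmin ((Set.update_mem_pi_iff_of_mem hP).mpr fun _ => hQ)
  linarith [pot_update_sub_pot hC0 P i Q]

theorem socCost_le_pot (hC : ∀ r, IsSubmodular (Cr r)) (hC0 : ∀ r, Cr r ∅ = 0)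
    (P : Fin n → Finset R) : socCost Cr P ≤ pot Cr P := by
  rw [pot_eq_sum_shapleyPotential]
  exact sum_le_sum fun r _ => (hC r).le_shapleyPotential (hC0 r) _

theorem pot_le_harmonicNum_mul_socCost (hmono : ∀ r, Monotone (Cr r)) (hC0 : ∀ r, Cr r ∅ = 0)
    (P : Fin n → Finset R) : pot Cr P ≤ harmonicNum n * socCost Cr P := by
  rw [socCost, pot_eq_sum_shapleyPotential, mul_sum]
  refine sum_le_sum fun r _ => (shapleyPotential_le (hmono r) _).trans ?_
  have hcard : #(users P r) ≤ n := (card_le_univ _).trans_eq (Fintype.card_fin n)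
  refine mul_le_mul_of_nonneg_right ?_ ((hC0 r).symm.trans_le (hmono r (empty_subset _)))
  exact sum_le_sum_of_subset_of_nonneg (Icc_subset_Icc_right hcard) fun _ _ _ => by positivity

end Game

theorem pos_shapley_submodular_general {n : ℕ} {R : Type*} [Fintype R] [DecidableEq R]
    (Strat : Fin n → Set (Finset R)) (Cr : R → Finset (Fin n) → ℝ)
    (hC0 : ∀ r, Cr r ∅ = 0)
    (hmono : ∀ r (T U : Finset (Fin n)), T ⊆ U → Cr r T ≤ Cr r U)
    (hsub : ∀ r (X Y : Finset (Fin n)) (i : Fin n), X ⊆ Y → i ∉ Y →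
      Cr r (insert i Y) - Cr r Y ≤ Cr r (insert i X) - Cr r X)
    (hStrat : ∀ i, (Strat i).Nonempty) :
    ∃ P : Fin n → Finset R, isPNE Strat Cr P ∧
      ∀ Q : Fin n → Finset R, (∀ i, Q i ∈ Strat i) →
        socCost Cr P ≤ harmonicNum n * socCost Cr Q := by
  obtain ⟨P, hP, hmin⟩ := (Set.univ.pi Strat).exists_min_image (pot Cr) (Set.toFinite _)
    (Set.univ_pi_nonempty_iff.mpr hStrat)
  refine ⟨P, isPNE_of_isMinOn hC0 hP hmin, fun Q hQ => ?_⟩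
  calc socCost Cr P ≤ pot Cr P := socCost_le_pot hsub hC0 P
    _ ≤ pot Cr Q := hmin Q (Set.mem_univ_pi.mpr hQ)
    _ ≤ harmonicNum n * socCost Cr Q :=
      pot_le_harmonicNum_mul_socCost (fun r _ _ => hmono r _ _) hC0 Q

/-- The price of stability of Shapley cost sharing games with submodular costs
is at most `H_n`. -/
theorem pos_shapley_submodular {n : ℕ} {R : Type*} [Fintype R] [DecidableEq R]
    (Strat : Fin n → Set (Finset R)) (Cr : R → Finset (Fin n) → ℝ)
    (hC0 : ∀ r, Cr r ∅ = 0)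
    (hnn : ∀ r T, 0 ≤ Cr r T)
    (hmono : ∀ r (T U : Finset (Fin n)), T ⊆ U → Cr r T ≤ Cr r U)
    (hsub : ∀ r (X Y : Finset (Fin n)) (i : Fin n), X ⊆ Y → i ∉ Y →
      Cr r (insert i Y) - Cr r Y ≤ Cr r (insert i X) - Cr r X)
    (hStrat : ∀ i, (Strat i).Nonempty) :
    ∃ P : Fin n → Finset R, isPNE Strat Cr P ∧
      ∀ Q : Fin n → Finset R, (∀ i, Q i ∈ Strat i) →
        socCost Cr P ≤ harmonicNum n * socCost Cr Q :=
  pos_shapley_submodular_general Strat Cr hC0 hmono hsub hStrat
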